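/- arXiv:2410.01976 — 2 statements merged into one kernel-verified Lean document; each statement's English description precedes it below -/
import Mathlib

section
/- Let $E_w/F_v$ be a wildly ramified quadratic extension of $2$-adic local fields, with different ideal $\mathfrak{D}_{E_w/F_v} = \mathfrak{p}_w^j$ generated by $\varpi - \bar{\varpi}$ for a uniformizer $\varpi$. Then $\varpi/\bar{\varpi} \in (1 + \mathfrak{p}_w^{j-1}) \setminus (1 + \mathfrak{p}_w^j)$; in particular $\varpi/\bar{\varpi} \equiv 1 \pmod{\mathfrak{p}_w}$, and $(\varpi/\bar{\varpi})^k \in 1 + \mathfrak{D}_{E_w/F_v}$ if and only if $k$ is even. -/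
open IsLocalRing

/-- Let `B/A` be the extension of rings of integers of a *wildly ramified* quadratic
extension `E_w/F_v` of 2-adic local fields (characteristic zero, residue characteristic
`2`, ramified), with Galois conjugation `σ`, and suppose the different ideal is
`𝔇_{E_w/F_v} = 𝔭_w^j`, generated by `ϖ - σ(ϖ)` for a uniformizer `ϖ`.
Then `ϖ/σ(ϖ) ∈ (1 + 𝔭_w^(j-1)) \ (1 + 𝔭_w^j)`; in particular
`ϖ/σ(ϖ) ≡ 1 (mod 𝔭_w)`, and `(ϖ/σ(ϖ))^k ∈ 1 + 𝔇_{E_w/F_v}` if and only if `k` is even.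
(The quotient `ϖ/σ(ϖ)` is realized as the unit `u` with `u · σ(ϖ) = ϖ`.) -/
theorem uniformizer_conj_quotient_wild
    (A B : Type*) [CommRing A] [CommRing B] [IsDomain A] [IsDomain B]
    [IsDiscreteValuationRing A] [IsDiscreteValuationRing B]
    [Algebra A B] [NoZeroSMulDivisors A B] [Module.Finite A B] [Module.Free A B]
    (hrank : Module.finrank A B = 2) [CharZero B]
    [Finite (ResidueField A)] [Finite (ResidueField B)]
    [IsAdicComplete (maximalIdeal A) A] [IsAdicComplete (maximalIdeal B) B]
    (σ : B ≃ₐ[A] B) (hσinv : ∀ x, σ (σ x) = x) (hσnt : ∃ x : B, σ x ≠ x)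
    (hfix : ∀ x : B, σ x = x → x ∈ (algebraMap A B).range)
    (hram : (maximalIdeal A).map (algebraMap A B) = maximalIdeal B ^ 2)
    (hwild : (2 : B) ∈ maximalIdeal B)
    (ϖ : B) (hϖ : Irreducible ϖ) (j : ℕ)
    (hDj : differentIdeal A B = maximalIdeal B ^ j)
    (hgen : Ideal.span {ϖ - σ ϖ} = differentIdeal A B) :
    ∃ u : Bˣ, (u : B) * σ ϖ = ϖ ∧
      (u : B) - 1 ∈ maximalIdeal B ^ (j - 1) ∧
      (u : B) - 1 ∉ maximalIdeal B ^ j ∧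
      (u : B) - 1 ∈ maximalIdeal B ∧
      ∀ k : ℕ, ((u ^ k : Bˣ) : B) - 1 ∈ differentIdeal A B ↔ Even k := by
  have hϖ0 : ϖ ≠ 0 := hϖ.ne_zero
  have hσϖ : Irreducible (σ ϖ) :=
    (MulEquiv.irreducible_iff (σ : B ≃* B)).mpr hϖ
  have hM : maximalIdeal B = Ideal.span {ϖ} := hϖ.maximalIdeal_eq
  have hϖmem : ϖ ∈ maximalIdeal B :=
    (mem_maximalIdeal _).mpr (mem_nonunits_iff.mpr hϖ.not_isUnit)
  have hσϖmem : σ ϖ ∈ maximalIdeal B :=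
    (mem_maximalIdeal _).mpr (mem_nonunits_iff.mpr hσϖ.not_isUnit)
  -- the unit u with u * σϖ = ϖ
  have hspan : Ideal.span {σ ϖ} = Ideal.span {ϖ} := by
    rw [← hσϖ.maximalIdeal_eq, ← hϖ.maximalIdeal_eq]
  obtain ⟨u, hu⟩ := Ideal.span_singleton_eq_span_singleton.mp hspan
  -- hu : σ ϖ * ↑u = ϖ
  have hu' : ((u : B) - 1) * σ ϖ = ϖ - σ ϖ := by linear_combination hu
  have hspanδ : Ideal.span {ϖ - σ ϖ} = maximalIdeal B ^ j := hgen.trans hDj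
  have hδmem : ϖ - σ ϖ ∈ maximalIdeal B ^ j := by
    rw [← hspanδ]; exact Ideal.subset_span rfl
  have hδ0 : ϖ - σ ϖ ≠ 0 := by
    intro h
    have hb : Ideal.span {ϖ - σ ϖ} = ⊥ := by rw [h, Ideal.span_singleton_eq_bot]
    have : ϖ ^ j ∈ (⊥ : Ideal B) := by
      rw [← hb, hspanδ]; exact Ideal.pow_mem_pow hϖmem j
    exact pow_ne_zero j hϖ0 (Ideal.mem_bot.mp this)
  -- trace in 𝔭²
  obtain ⟨a, ha⟩ := hfix (ϖ + σ ϖ) (by rw [map_add, hσinv, add_comm])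
  have hamem : a ∈ maximalIdeal A := by
    rw [mem_maximalIdeal _, mem_nonunits_iff]
    intro hun
    have : IsUnit (ϖ + σ ϖ) := ha ▸ hun.map (algebraMap A B)
    exact (mem_nonunits_iff.mp ((mem_maximalIdeal _).mp
      (add_mem hϖmem hσϖmem))) this
  have htr2 : ϖ + σ ϖ ∈ maximalIdeal B ^ 2 := by
    rw [← hram, ← ha]; exact Ideal.mem_map_of_mem _ hamem
  have hδ2 : ϖ - σ ϖ ∈ maximalIdeal B ^ 2 := by
    have h2ϖ : 2 * ϖ ∈ maximalIdeal B ^ 2 := by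
      rw [pow_two]; exact Ideal.mul_mem_mul hwild hϖmem
    have he : ϖ - σ ϖ = 2 * ϖ - (ϖ + σ ϖ) := by ring
    rw [he]; exact sub_mem h2ϖ htr2
  -- j ≥ 2
  have hj2 : 2 ≤ j := by
    by_contra h
    push_neg at h
    have hle : maximalIdeal B ^ j ≤ maximalIdeal B ^ 2 := by
      rw [← hspanδ]
      exact Ideal.span_le.mpr (by simpa using hδ2)
    have h1 : ϖ ^ j ∈ Ideal.span {ϖ ^ 2} := by
      rw [← Ideal.span_singleton_pow, ← hM]
      exact hle (Ideal.pow_mem_pow hϖmem j)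
    have h2 : ϖ ^ 2 ∣ ϖ := by
      have := Ideal.mem_span_singleton.mp h1
      calc ϖ ^ 2 ∣ ϖ ^ j := this
        _ ∣ ϖ ^ 1 := pow_dvd_pow ϖ (by omega)
        _ = ϖ := pow_one ϖ
    have h2' : ϖ * ϖ ∣ ϖ * 1 := by rw [mul_one, ← pow_two]; exact h2
    have : ϖ ∣ 1 := (mul_dvd_mul_iff_left hϖ0).mp h2'
    exact hϖ.not_isUnit (isUnit_of_dvd_one this)
  have hj1 : 1 ≤ j := by omega
  -- associated facts
  obtain ⟨w, hw⟩ := Ideal.span_singleton_eq_span_singleton.mp hspan.symm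
  -- hw : ϖ * ↑w = σ ϖ
  have hMj : maximalIdeal B ^ j = Ideal.span {ϖ ^ j} := by
    rw [hM, Ideal.span_singleton_pow]
  have hMj1 : maximalIdeal B ^ (j - 1) = Ideal.span {ϖ ^ (j - 1)} := by
    rw [hM, Ideal.span_singleton_pow]
  obtain ⟨v, hv⟩ := Ideal.span_singleton_eq_span_singleton.mp (hspanδ.trans hMj)
  -- hv : (ϖ - σ ϖ) * ↑v = ϖ ^ j
  have hpj : ϖ ^ j = ϖ * ϖ ^ (j - 1) := by
    conv_lhs => rw [← Nat.sub_add_cancel hj1]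
    rw [pow_succ, mul_comm]
  have h1 : ϖ * (((u : B) - 1) * ((w * v : Bˣ) : B)) = ϖ * ϖ ^ (j - 1) := by
    rw [← hpj, ← hv, ← hu', ← hw]
    push_cast
    ring
  have htc : ((u : B) - 1) * ((w * v : Bˣ) : B) = ϖ ^ (j - 1) :=
    mul_left_cancel₀ hϖ0 h1
  have ht_eq : (u : B) - 1 = ϖ ^ (j - 1) * (((w * v)⁻¹ : Bˣ) : B) := by
    rw [← htc, mul_assoc, Units.mul_inv, mul_one]
  have ht1 : (u : B) - 1 ∈ maximalIdeal B ^ (j - 1) := by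
    rw [hMj1]
    exact Ideal.mem_span_singleton.mpr ⟨_, ht_eq⟩
  have ht2 : (u : B) - 1 ∉ maximalIdeal B ^ j := by
    rw [hMj]
    intro h
    have hd : ϖ ^ j ∣ ((u : B) - 1) := Ideal.mem_span_singleton.mp h
    rw [ht_eq] at hd
    have hd2 : ϖ ^ j ∣ ϖ ^ (j - 1) := (Units.dvd_mul_right).mp hd
    rw [hpj, mul_comm] at hd2
    have : ϖ ^ (j - 1) * ϖ ∣ ϖ ^ (j - 1) * 1 := by rwa [mul_one]
    have := (mul_dvd_mul_iff_left (pow_ne_zero (j - 1) hϖ0)).mp this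
    exact hϖ.not_isUnit (isUnit_of_dvd_one this)
  have htm : (u : B) - 1 ∈ maximalIdeal B := by
    exact Ideal.pow_le_self (show j - 1 ≠ 0 by omega) ht1
  -- key: u^k - 1 - k*(u-1) ∈ 𝔭^j
  have hjle : j ≤ (j - 1) + (j - 1) := by omega
  have key : ∀ k : ℕ, (u : B) ^ k - 1 - (k : B) * ((u : B) - 1) ∈ maximalIdeal B ^ j := by
    intro k
    induction k with
    | zero => simp
    | succ k ih =>
      have huk1 : (u : B) ^ k - 1 ∈ maximalIdeal B ^ (j - 1) := by
        have h1 : (u : B) ^ k - 1 =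
            ((u : B) ^ k - 1 - (k : B) * ((u : B) - 1)) + (k : B) * ((u : B) - 1) := by
          ring
        rw [h1]
        exact add_mem (Ideal.pow_le_pow_right (by omega) ih)
          (Ideal.mul_mem_left _ _ ht1)
      have hprod : ((u : B) - 1) * ((u : B) ^ k - 1) ∈ maximalIdeal B ^ j := by
        have := Ideal.mul_mem_mul ht1 huk1
        rw [← pow_add] at this
        exact Ideal.pow_le_pow_right hjle this
      have hid : (u : B) ^ (k + 1) - 1 - ((k : ℕ) + 1 : B) * ((u : B) - 1) =
          ((u : B) ^ k - 1 - (k : B) * ((u : B) - 1)) +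
            ((u : B) - 1) * ((u : B) ^ k - 1) := by
        ring
      have := add_mem ih hprod
      rw [← hid] at this
      convert this using 2
      push_cast
      ring
  have hktmem : ∀ m : ℕ, (2 : B) * ((m : B) * ((u : B) - 1)) ∈ maximalIdeal B ^ j := by
    intro m
    have := Ideal.mul_mem_mul hwild (Ideal.mul_mem_left _ (m : B) ht1)
    rwa [← pow_succ', Nat.sub_add_cancel hj1] at this
  refine ⟨u, by rw [mul_comm]; exact hu, ht1, ht2, htm, ?_⟩
  intro k
  rw [hDj, Units.val_pow_eq_pow_val]
  constructor
  · intro hk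
    by_contra hodd
    rw [Nat.not_even_iff_odd] at hodd
    obtain ⟨m, hm⟩ := hodd
    have hkt : (k : B) * ((u : B) - 1) ∈ maximalIdeal B ^ j := by
      have h1 : (k : B) * ((u : B) - 1) =
          ((u : B) ^ k - 1) - ((u : B) ^ k - 1 - (k : B) * ((u : B) - 1)) := by ring
      rw [h1]; exact sub_mem hk (key k)
    have hsplit : ((u : B) - 1) =
        (k : B) * ((u : B) - 1) - (2 : B) * ((m : B) * ((u : B) - 1)) := by
      subst hm; push_cast; ring
    rw [hsplit] at ht2
    exact ht2 (sub_mem hkt (hktmem m))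
  · intro hk
    obtain ⟨m, hm⟩ := hk
    have hkt : (k : B) * ((u : B) - 1) ∈ maximalIdeal B ^ j := by
      have h1 : (k : B) * ((u : B) - 1) = (2 : B) * ((m : B) * ((u : B) - 1)) := by
        subst hm; push_cast; ring
      rw [h1]; exact hktmem m
    have h2 : (u : B) ^ k - 1 =
        ((u : B) ^ k - 1 - (k : B) * ((u : B) - 1)) + (k : B) * ((u : B) - 1) := by ring
    rw [h2]; exact add_mem (key k) hkt
end

section
/- Let $E_w/F_v$ be a ramified quadratic extension of non-archimedean local fields, $U^k = 1 + \mathfrak{p}_w^k$ for $k \geq 1$ and $U^0 = \mathcal{O}_{E_w}^\times$. For $k \geq 1$, there exists a character of $E_w^\times$ of conductor exactly $\mathfrak{p}_w^k$ that is trivial on $F_v^\times$ if and only if $k$ is even. -/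
open IsLocalRing


noncomputable def ratChar : ℚ →+ Additive ℂˣ :=
  AddMonoidHom.mk' (fun q => Additive.ofMul
    (Units.mk0 (Complex.exp (2 * Real.pi * Complex.I * q)) (Complex.exp_ne_zero _)))
    (by
      intro a b
      apply Additive.toMul.injective
      ext
      push_cast
      simp [mul_add, Complex.exp_add])

lemma ratChar_int (n : ℤ) : ratChar n = 0 := by
  apply Additive.toMul.injective
  ext
  show Complex.exp _ = 1
  rw [Complex.exp_eq_one_iff]
  exact ⟨n, by push_cast; ring⟩

noncomputable def circChar : AddCircle (1 : ℚ) →+ Additive ℂˣ :=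
  QuotientAddGroup.lift _ ratChar (by
    rintro q ⟨n, rfl⟩
    simpa using ratChar_int n)

lemma circChar_eq_zero {x : AddCircle (1 : ℚ)} (h : circChar x = 0) : x = 0 := by
  induction x using QuotientAddGroup.induction_on with
  | H q =>
    rw [AddCircle.coe_eq_zero_iff]
    have : Complex.exp (2 * Real.pi * Complex.I * q) = 1 := congrArg (fun y => ((Additive.toMul y : ℂˣ) : ℂ)) h
    rw [Complex.exp_eq_one_iff] at this
    obtain ⟨n, hn⟩ := this
    refine ⟨n, ?_⟩
    have h2 : (2 * Real.pi * Complex.I : ℂ) ≠ 0 := by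
      refine mul_ne_zero (mul_ne_zero two_ne_zero ?_) Complex.I_ne_zero
      exact_mod_cast Real.pi_ne_zero
    have : (q : ℂ) = n := by
      have := hn.trans (by ring : ((n : ℂ) * (2 * Real.pi * Complex.I)) = 2 * Real.pi * Complex.I * n)
      exact mul_left_cancel₀ h2 this
    have : (q : ℚ) = n := by exact_mod_cast this
    simp [this]

open QuotientGroup in
lemma exists_char {G : Type*} [CommGroup G] (H : Subgroup G) {x : G} (hx : x ∉ H) :
    ∃ χ : G →* ℂˣ, (∀ h ∈ H, χ h = 1) ∧ χ x ≠ 1 := by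
  have hx1 : Additive.ofMul (QuotientGroup.mk x : G ⧸ H) ≠ 0 := by
    simpa [QuotientGroup.eq_one_iff] using hx
  obtain ⟨c, hc⟩ := CharacterModule.exists_character_apply_ne_zero_of_ne_zero hx1
  refine ⟨MonoidHom.mk' (fun g => Additive.toMul (circChar (c (Additive.ofMul
      (QuotientGroup.mk g : G ⧸ H))))) ?_, ?_, ?_⟩
  · intro a b
    show Additive.toMul (circChar (c (Additive.ofMul (QuotientGroup.mk (a*b) : G ⧸ H)))) = _
    have : Additive.ofMul (QuotientGroup.mk (a*b) : G ⧸ H)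
        = Additive.ofMul (QuotientGroup.mk a : G ⧸ H) + Additive.ofMul (QuotientGroup.mk b : G ⧸ H) := rfl
    rw [this, map_add, map_add]
    rfl
  · intro h hh
    have : (QuotientGroup.mk h : G ⧸ H) = 1 := (QuotientGroup.eq_one_iff h).2 hh
    simp [this]
  · intro hcon
    apply hc
    apply circChar_eq_zero
    exact Additive.toMul.injective hcon

open IsLocalRing

section alg
variable {A : Type*} [CommRing A] [IsDomain A] [IsDiscreteValuationRing A]
  {B : Type*} [CommRing B] [IsDomain B] [IsDiscreteValuationRing B]
  [Algebra A B]

example : ValuationRing A := inferInstance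

/-- units map into units, so maximal ideal pulls back -/
lemma map_mem_max {a : A} (h : algebraMap A B a ∈ maximalIdeal B) : a ∈ maximalIdeal A := by
  rw [mem_maximalIdeal, mem_nonunits_iff]
  intro hu
  exact (mem_maximalIdeal _).1 h ((hu.map (algebraMap A B)))

variable (hram : (maximalIdeal A).map (algebraMap A B) = maximalIdeal B ^ 2)
include hram

lemma max_pow_map {m : ℕ} {a : A} (ha : a ∈ maximalIdeal A ^ m) :
    algebraMap A B a ∈ maximalIdeal B ^ (2 * m) := by
  have h1 : algebraMap A B a ∈ (maximalIdeal A ^ m).map (algebraMap A B) :=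
    Ideal.mem_map_of_mem _ ha
  rwa [Ideal.map_pow, hram, ← pow_mul] at h1

lemma mem_max_of_map {a : A} (h : a ∈ maximalIdeal A) : algebraMap A B a ∈ maximalIdeal B := by
  have := max_pow_map (m := 1) (B := B) hram (by simpa using h)
  refine SetLike.le_def.1 ?_ this
  exact Ideal.pow_le_self two_ne_zero

/-- image of a uniformizer of A is associated to ϖB^2 -/
lemma unif_assoc {ϖA : A} (hA : Irreducible ϖA) {ϖB : B} (hB : Irreducible ϖB) :
    Associated (algebraMap A B ϖA) (ϖB ^ 2) := by
  rw [← Ideal.span_singleton_eq_span_singleton, ← Ideal.span_singleton_pow]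
  have h1 : Ideal.span {algebraMap A B ϖA} = (Ideal.span {ϖA}).map (algebraMap A B) := by
    rw [Ideal.map_span, Set.image_singleton]
  rw [h1, ← (IsDiscreteValuationRing.irreducible_iff_uniformizer ϖA).1 hA, hram,
    (IsDiscreteValuationRing.irreducible_iff_uniformizer ϖB).1 hB]

lemma odd_pow_up {m : ℕ} {a : A}
    (h : algebraMap A B a ∈ maximalIdeal B ^ (2 * m - 1)) (hm : 1 ≤ m) :
    a ∈ maximalIdeal A ^ m := by
  rcases eq_or_ne a 0 with rfl | ha0
  · simp
  obtain ⟨ϖA, hϖA⟩ := IsDiscreteValuationRing.exists_irreducible A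
  obtain ⟨ϖB, hϖB⟩ := IsDiscreteValuationRing.exists_irreducible B
  obtain ⟨n, hn⟩ := IsDiscreteValuationRing.associated_pow_irreducible ha0 hϖA
  have hmem : a ∈ maximalIdeal A ^ n := by
    rw [(IsDiscreteValuationRing.irreducible_iff_uniformizer ϖA).1 hϖA,
      Ideal.span_singleton_pow, Ideal.mem_span_singleton]
    exact hn.symm.dvd
  have hge : m ≤ n := by
    by_contra hlt
    push_neg at hlt
    have hassoc : Associated (algebraMap A B a) (ϖB ^ (2 * n)) := by
      have h1 := hn.map (algebraMap A B : A →+* B)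
      rw [map_pow] at h1
      have h2 := h1.trans ((unif_assoc hram hϖA hϖB).pow_pow (n := n))
      rwa [← pow_mul] at h2
    rw [(IsDiscreteValuationRing.irreducible_iff_uniformizer ϖB).1 hϖB,
      Ideal.span_singleton_pow, Ideal.mem_span_singleton] at h
    have hdvd : ϖB ^ (2 * m - 1) ∣ ϖB ^ (2 * n) := h.trans hassoc.dvd
    rw [pow_dvd_pow_iff hϖB.ne_zero hϖB.not_isUnit] at hdvd
    omega
  exact SetLike.le_def.1 (Ideal.pow_le_pow_right hge) hmem

end alg

section alg2
variable {A K : Type*} [CommRing A] [IsDomain A] [IsDiscreteValuationRing A]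
  [Field K] [Algebra A K] [IsFractionRing A K]
  {B L : Type*} [Field L] [Algebra K L]
  [CommRing B] [IsDomain B] [IsDiscreteValuationRing B]
  [Algebra B L] [IsFractionRing B L]
  [Algebra A B] [Algebra A L] [IsScalarTower A K L] [IsScalarTower A B L]

lemma injAB (hAL : Function.Injective (algebraMap A L)) :
    Function.Injective (algebraMap A B) := by
  rw [IsScalarTower.algebraMap_eq A B L] at hAL
  exact Function.Injective.of_comp hAL


variable (hram : (IsLocalRing.maximalIdeal A).map (algebraMap A B) = IsLocalRing.maximalIdeal B ^ 2)
include hram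

/-- an element of K that is "in B" is in A -/
lemma mem_range_of_mem_range {α : K} {b : B} (h : algebraMap K L α = algebraMap B L b) :
    ∃ a : A, algebraMap A B a = b := by
  obtain ⟨x, y, hy, rfl⟩ := IsFractionRing.div_surjective (A := A) α
  have hy0 : algebraMap A K y ≠ 0 := by
    simpa using (IsFractionRing.injective A K).ne_iff.2 (nonZeroDivisors.ne_zero hy)
  obtain ⟨c, hc | hc⟩ := ValuationRing.cond x y
  · -- x * c = y
    rcases eq_or_ne x 0 with rfl | hx0
    · refine ⟨0, ?_⟩
      rw [map_zero]
      apply IsFractionRing.injective B L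
      rw [map_zero, ← h]
      simp
    · -- alg x ≠ 0 ; α * alg c = 1
      have hx0' : algebraMap A K x ≠ 0 := by
        simpa using (IsFractionRing.injective A K).ne_iff.2 hx0
      have hc0 : c ≠ 0 := by
        rintro rfl
        rw [mul_zero] at hc
        exact nonZeroDivisors.ne_zero hy hc.symm
      have hc0' : algebraMap A K c ≠ 0 := by
        simpa using (IsFractionRing.injective A K).ne_iff.2 hc0
      have hy' : algebraMap A K y = algebraMap A K x * algebraMap A K c := by
        rw [← map_mul, hc]
      have hαc : algebraMap A K x / algebraMap A K y * algebraMap A K c = 1 := by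
        rw [hy']
        field_simp
      -- in B : b * algebraMap A B c = 1
      have hbc : b * algebraMap A B c = 1 := by
        apply IsFractionRing.injective B L
        rw [map_mul, map_one, ← h, ← IsScalarTower.algebraMap_apply A B L,
          IsScalarTower.algebraMap_apply A K L]
        rw [← map_mul, hαc, map_one]
      have hcu : IsUnit (algebraMap A B c) := IsUnit.of_mul_eq_one _ (by rwa [mul_comm] at hbc)
      have hcA : IsUnit c := by
        by_contra hnc
        have : c ∈ IsLocalRing.maximalIdeal A := by
          rwa [IsLocalRing.mem_maximalIdeal, mem_nonunits_iff]
        exact (IsLocalRing.mem_maximalIdeal _).1 (mem_max_of_map hram this) hcu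
      obtain ⟨cu, rfl⟩ := hcA
      refine ⟨↑cu⁻¹, ?_⟩
      have : (algebraMap A B ↑cu) * algebraMap A B ↑cu⁻¹ = 1 := by
        rw [← map_mul]; simp
      calc algebraMap A B ↑cu⁻¹ = b * ((algebraMap A B ↑cu) * algebraMap A B ↑cu⁻¹) := by
            rw [← mul_assoc, hbc, one_mul]
        _ = b := by rw [this, mul_one]
  · -- y * c = x : α = alg c
    have hα : algebraMap A K x / algebraMap A K y = algebraMap A K c := by
      have hx' : algebraMap A K x = algebraMap A K y * algebraMap A K c := by
        rw [← map_mul, hc]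
      rw [hx', mul_comm, mul_div_assoc, div_self hy0, mul_one]
    refine ⟨c, ?_⟩
    apply IsFractionRing.injective B L
    rw [← h, hα, ← IsScalarTower.algebraMap_apply A B L, IsScalarTower.algebraMap_apply A K L]

end alg2

section alg3
variable {A K : Type*} [CommRing A] [IsDomain A] [IsDiscreteValuationRing A]
  [Field K] [Algebra A K] [IsFractionRing A K]
  {B L : Type*} [Field L] [Algebra K L]
  [CommRing B] [IsDomain B] [IsDiscreteValuationRing B]
  [Algebra B L] [IsFractionRing B L]
  [Algebra A B] [Algebra A L] [IsScalarTower A K L] [IsScalarTower A B L]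

variable (hram : (IsLocalRing.maximalIdeal A).map (algebraMap A B) = IsLocalRing.maximalIdeal B ^ 2)
include hram

/-- the key claim : a relation `a + b y + c ϖ = 0` with `y` not congruent to any element
of `A` forces `a = b = c = 0`. -/
lemma rel_zero {ϖ : B} (hϖ : Irreducible ϖ) {y : B}
    (hy : ∀ c : A, y - algebraMap A B c ∉ IsLocalRing.maximalIdeal B)
    (hAL : Function.Injective (algebraMap A L))
    {a b c : A} (hrel : algebraMap A B a + algebraMap A B b * y + algebraMap A B c * ϖ = 0) :
    a = 0 ∧ b = 0 ∧ c = 0 := by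
  by_contra hne
  have hI : Ideal.span {a, b, c} ≠ ⊥ := by
    rw [Ne, Ideal.span_eq_bot]
    intro hall
    exact hne ⟨hall a (by simp), hall b (by simp), hall c (by simp)⟩
  obtain ⟨ϖA, hϖA⟩ := IsDiscreteValuationRing.exists_irreducible A
  obtain ⟨n, hn⟩ := IsDiscreteValuationRing.ideal_eq_span_pow_irreducible hI hϖA
  have hmem : ∀ x ∈ ({a, b, c} : Set A), ϖA ^ n ∣ x := by
    intro x hx
    rw [← Ideal.mem_span_singleton, ← hn]
    exact Ideal.subset_span hx
  obtain ⟨a1, ha1⟩ := hmem a (by simp)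
  obtain ⟨b1, hb1⟩ := hmem b (by simp)
  obtain ⟨c1, hc1⟩ := hmem c (by simp)
  -- not all of a1 b1 c1 are in the maximal ideal
  have hnotall : ¬ (a1 ∈ IsLocalRing.maximalIdeal A ∧ b1 ∈ IsLocalRing.maximalIdeal A ∧
      c1 ∈ IsLocalRing.maximalIdeal A) := by
    rintro ⟨h1, h2, h3⟩
    have key : ∀ x1 : A, x1 ∈ IsLocalRing.maximalIdeal A → ϖA ^ (n + 1) ∣ ϖA ^ n * x1 := by
      intro x1 hx1
      rw [(IsDiscreteValuationRing.irreducible_iff_uniformizer ϖA).1 hϖA,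
        Ideal.mem_span_singleton] at hx1
      obtain ⟨t, rfl⟩ := hx1
      exact ⟨t, by ring⟩
    have hspan : Ideal.span {a, b, c} ≤ Ideal.span {ϖA ^ (n + 1)} := by
      rw [Ideal.span_le]
      rintro x (rfl | rfl | rfl) <;>
        rw [SetLike.mem_coe, Ideal.mem_span_singleton]
      · exact ha1 ▸ key a1 h1
      · exact hb1 ▸ key b1 h2
      · exact hc1 ▸ key c1 h3
    rw [hn] at hspan
    have := hspan (Ideal.mem_span_singleton_self _)
    rw [Ideal.mem_span_singleton, pow_dvd_pow_iff hϖA.ne_zero hϖA.not_isUnit] at this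
    omega
  -- cancel ϖA ^ n from the relation
  have hπn0 : algebraMap A B (ϖA ^ n) ≠ 0 := fun h0 =>
    pow_ne_zero n hϖA.ne_zero (injAB (L := L) hAL (by rw [h0, map_zero]))
  have hrel1 : algebraMap A B a1 + algebraMap A B b1 * y + algebraMap A B c1 * ϖ = 0 := by
    have : algebraMap A B (ϖA ^ n) *
        (algebraMap A B a1 + algebraMap A B b1 * y + algebraMap A B c1 * ϖ) = 0 := by
      rw [← hrel, ha1, hb1, hc1]
      push_cast [map_mul]
      ring
    exact (mul_eq_zero.1 this).resolve_left hπn0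
  -- b1 must be in the maximal ideal
  have hb1m : b1 ∈ IsLocalRing.maximalIdeal A := by
    by_contra hb1u
    have hu : IsUnit b1 := by
      rw [IsLocalRing.mem_maximalIdeal, mem_nonunits_iff, not_not] at hb1u
      exact hb1u
    obtain ⟨v, rfl⟩ := hu
    apply hy (-(↑v⁻¹ * a1))
    have hvv : algebraMap A B ↑v⁻¹ * algebraMap A B (↑v : A) = 1 := by
      rw [← map_mul]; simp
    have hϖmem : ϖ ∈ IsLocalRing.maximalIdeal B := by
      rw [(IsDiscreteValuationRing.irreducible_iff_uniformizer ϖ).1 hϖ]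
      exact Ideal.mem_span_singleton_self ϖ
    have : y - algebraMap A B (-(↑v⁻¹ * a1)) = (- algebraMap A B ↑v⁻¹ * algebraMap A B c1) * ϖ := by
      have hyv : algebraMap A B (↑v : A) * y = - algebraMap A B a1 - algebraMap A B c1 * ϖ := by
        linear_combination hrel1
      rw [map_neg, map_mul]
      linear_combination (algebraMap A B (↑v⁻¹ : A)) * hyv - y * hvv
    rw [this]
    exact Ideal.mul_mem_left _ _ hϖmem
  have hϖmem : ϖ ∈ IsLocalRing.maximalIdeal B := by
    rw [(IsDiscreteValuationRing.irreducible_iff_uniformizer ϖ).1 hϖ]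
    exact Ideal.mem_span_singleton_self ϖ
  have ha1m : a1 ∈ IsLocalRing.maximalIdeal A := by
    apply map_mem_max (B := B)
    have : algebraMap A B a1 = - algebraMap A B b1 * y - algebraMap A B c1 * ϖ := by
      linear_combination hrel1
    rw [this]
    exact sub_mem (Ideal.mul_mem_right _ _ (neg_mem (mem_max_of_map hram hb1m)))
      (Ideal.mul_mem_left _ _ hϖmem)
  have hc1m : c1 ∈ IsLocalRing.maximalIdeal A := by
    have hsq : ∀ x1 : A, x1 ∈ IsLocalRing.maximalIdeal A →
        algebraMap A B x1 ∈ IsLocalRing.maximalIdeal B ^ 2 := by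
      intro x1 hx1
      have := max_pow_map (B := B) hram (m := 1) (by simpa using hx1)
      simpa using this
    have hcϖ : algebraMap A B c1 * ϖ ∈ IsLocalRing.maximalIdeal B ^ 2 := by
      have : algebraMap A B c1 * ϖ = - algebraMap A B a1 - algebraMap A B b1 * y := by
        linear_combination hrel1
      rw [this]
      exact sub_mem (neg_mem (hsq a1 ha1m)) (Ideal.mul_mem_right _ _ (hsq b1 hb1m))
    rw [(IsDiscreteValuationRing.irreducible_iff_uniformizer ϖ).1 hϖ,
      Ideal.span_singleton_pow, Ideal.mem_span_singleton] at hcϖ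
    obtain ⟨t, ht⟩ := hcϖ
    have : algebraMap A B c1 = ϖ * t := by
      apply mul_right_cancel₀ hϖ.ne_zero
      rw [ht]; ring
    apply map_mem_max (B := B)
    rw [this]
    exact Ideal.mul_mem_right _ _ hϖmem
  exact hnotall ⟨ha1m, hb1m, hc1m⟩

lemma residue_surj (hrank : Module.finrank K L = 2) (y : B) :
    ∃ c : A, y - algebraMap A B c ∈ IsLocalRing.maximalIdeal B := by
  by_contra hy
  push_neg at hy
  have hAL : Function.Injective (algebraMap A L) := by
    rw [IsScalarTower.algebraMap_eq A K L]
    exact (algebraMap K L).injective.comp (IsFractionRing.injective A K)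
  obtain ⟨ϖ, hϖ⟩ := IsDiscreteValuationRing.exists_irreducible B
  haveI : FiniteDimensional K L := FiniteDimensional.of_finrank_pos (by omega)
  -- the linear map (a, b, c) ↦ a + b y + c ϖ
  let f : (Fin 3 → K) →ₗ[K] L :=
    { toFun := fun v => algebraMap K L (v 0) + algebraMap K L (v 1) * algebraMap B L y +
        algebraMap K L (v 2) * algebraMap B L ϖ
      map_add' := by intro v w; simp [map_add]; ring
      map_smul' := by
        intro m v
        simp [Algebra.smul_def, map_mul]
        ring }
  have hinj : Function.Injective f := by
    rw [← LinearMap.ker_eq_bot, LinearMap.ker_eq_bot']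
    intro v hv
    -- clear denominators
    obtain ⟨x0, d0, hd0, h0⟩ := IsFractionRing.div_surjective (A := A) (v 0)
    obtain ⟨x1, d1, hd1, h1⟩ := IsFractionRing.div_surjective (A := A) (v 1)
    obtain ⟨x2, d2, hd2, h2⟩ := IsFractionRing.div_surjective (A := A) (v 2)
    have hd0' : algebraMap A K d0 ≠ 0 := by
      simpa using (IsFractionRing.injective A K).ne_iff.2 (nonZeroDivisors.ne_zero hd0)
    have hd1' : algebraMap A K d1 ≠ 0 := by
      simpa using (IsFractionRing.injective A K).ne_iff.2 (nonZeroDivisors.ne_zero hd1)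
    have hd2' : algebraMap A K d2 ≠ 0 := by
      simpa using (IsFractionRing.injective A K).ne_iff.2 (nonZeroDivisors.ne_zero hd2)
    have hfv : algebraMap K L (algebraMap A K (d0 * d1 * d2)) * f v = 0 := by
      rw [hv, mul_zero]
    have key : algebraMap A B (x0 * d1 * d2) + algebraMap A B (d0 * x1 * d2) * y +
        algebraMap A B (d0 * d1 * x2) * ϖ = 0 := by
      apply IsFractionRing.injective B L
      rw [map_zero]
      have habl : ∀ a : A, algebraMap B L (algebraMap A B a)
          = algebraMap K L (algebraMap A K a) := by
        intro a
        rw [← IsScalarTower.algebraMap_apply A B L, IsScalarTower.algebraMap_apply A K L]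
      have c0 : algebraMap A K (d0 * d1 * d2) * v 0 = algebraMap A K (x0 * d1 * d2) := by
        rw [← h0, map_mul, map_mul, map_mul, map_mul]
        field_simp
      have c1 : algebraMap A K (d0 * d1 * d2) * v 1 = algebraMap A K (d0 * x1 * d2) := by
        rw [← h1, map_mul, map_mul, map_mul, map_mul]
        field_simp
      have c2 : algebraMap A K (d0 * d1 * d2) * v 2 = algebraMap A K (d0 * d1 * x2) := by
        rw [← h2, map_mul, map_mul, map_mul, map_mul]
        field_simp
      have e1 : algebraMap K L (algebraMap A K (d0 * d1 * d2)) * f v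
          = algebraMap B L (algebraMap A B (x0 * d1 * d2) + algebraMap A B (d0 * x1 * d2) * y +
            algebraMap A B (d0 * d1 * x2) * ϖ) := by
        show algebraMap K L (algebraMap A K (d0 * d1 * d2)) *
          (algebraMap K L (v 0) + algebraMap K L (v 1) * algebraMap B L y +
            algebraMap K L (v 2) * algebraMap B L ϖ) = _
        rw [map_add, map_add, map_mul (algebraMap B L), map_mul (algebraMap B L),
          habl, habl, habl, ← c0, ← c1, ← c2]
        simp only [map_mul]
        ring
      rw [← e1, hfv]
    obtain ⟨hz0, hz1, hz2⟩ := rel_zero (L := L) hram hϖ hy hAL key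
    have hx0 : x0 = 0 := by
      rcases mul_eq_zero.1 ((mul_eq_zero.1 hz0).resolve_right
        (nonZeroDivisors.ne_zero hd2)) with h | h
      · exact h
      · exact absurd h (nonZeroDivisors.ne_zero hd1)
    have hx1 : x1 = 0 := by
      rcases mul_eq_zero.1 ((mul_eq_zero.1 hz1).resolve_right
        (nonZeroDivisors.ne_zero hd2)) with h | h
      · exact absurd h (nonZeroDivisors.ne_zero hd0)
      · exact h
    have hx2 : x2 = 0 := by
      rcases mul_eq_zero.1 hz2 with h | h
      · rcases mul_eq_zero.1 h with h' | h'
        · exact absurd h' (nonZeroDivisors.ne_zero hd0)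
        · exact absurd h' (nonZeroDivisors.ne_zero hd1)
      · exact h
    funext i
    fin_cases i
    · show v 0 = 0
      rw [← h0, hx0, map_zero, zero_div]
    · show v 1 = 0
      rw [← h1, hx1, map_zero, zero_div]
    · show v 2 = 0
      rw [← h2, hx2, map_zero, zero_div]
  have := LinearMap.finrank_le_finrank_of_injective hinj
  rw [hrank, Module.finrank_fin_fun] at this
  omega

end alg3

def unitsSub {B : Type*} [CommRing B] (I : Ideal B) : Subgroup Bˣ where
  carrier := {u | (u : B) - 1 ∈ I}
  one_mem' := by simp
  mul_mem' := by
    intro u v hu hv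
    show ((u * v : Bˣ) : B) - 1 ∈ I
    have : ((u * v : Bˣ) : B) - 1 = ((u : B) - 1) * v + ((v : B) - 1) := by
      push_cast; ring
    rw [this]
    exact add_mem (Ideal.mul_mem_right _ _ hu) hv
  inv_mem' := by
    intro u hu
    show ((u⁻¹ : Bˣ) : B) - 1 ∈ I
    have : ((u⁻¹ : Bˣ) : B) - 1 = -(((u : B) - 1) * (u⁻¹ : Bˣ)) := by
      have h := Units.mul_inv u
      linear_combination h
    rw [this]
    exact neg_mem (Ideal.mul_mem_right _ _ hu)

lemma mem_unitsSub {B : Type*} [CommRing B] {I : Ideal B} {u : Bˣ} :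
    u ∈ unitsSub I ↔ (u : B) - 1 ∈ I := Iff.rfl

section main
variable {A K : Type*} [CommRing A] [IsDomain A] [IsDiscreteValuationRing A]
  [Field K] [Algebra A K] [IsFractionRing A K]
  {B L : Type*} [Field L] [Algebra K L]
  [CommRing B] [IsDomain B] [IsDiscreteValuationRing B]
  [Algebra B L] [IsFractionRing B L]
  [Algebra A B] [Algebra A L] [IsScalarTower A K L] [IsScalarTower A B L]

variable (hram : (IsLocalRing.maximalIdeal A).map (algebraMap A B) = IsLocalRing.maximalIdeal B ^ 2)
include hram

lemma odd_case (hrank : Module.finrank K L = 2) {k m : ℕ} (hkm : k = 2 * m + 1)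
    (χ : Lˣ →* ℂˣ)
    (h1 : ∀ u : Bˣ, (u : B) - 1 ∈ IsLocalRing.maximalIdeal B ^ k →
      χ (Units.map (algebraMap B L).toMonoidHom u) = 1)
    (h3 : ∀ a : Kˣ, χ (Units.map (algebraMap K L).toMonoidHom a) = 1)
    (u : Bˣ) (hu : (u : B) - 1 ∈ IsLocalRing.maximalIdeal B ^ (k - 1)) :
    χ (Units.map (algebraMap B L).toMonoidHom u) = 1 := by
  obtain ⟨ϖA, hϖA⟩ := IsDiscreteValuationRing.exists_irreducible A
  have hk1 : k - 1 = 2 * m := by omega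
  have hspan : IsLocalRing.maximalIdeal B ^ (2 * m)
      = Ideal.span {algebraMap A B (ϖA ^ m)} := by
    rw [pow_mul, ← hram, ← Ideal.map_pow,
      (IsDiscreteValuationRing.irreducible_iff_uniformizer ϖA).1 hϖA,
      Ideal.span_singleton_pow, Ideal.map_span, Set.image_singleton]
  rw [hk1, hspan, Ideal.mem_span_singleton] at hu
  obtain ⟨t, ht⟩ := hu
  obtain ⟨c, hc⟩ := residue_surj (L := L) (K := K) hram hrank t
  set a : A := 1 + ϖA ^ m * c with ha_def
  have hdiff : algebraMap A B a - (u : B) ∈ IsLocalRing.maximalIdeal B ^ k := by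
    have heq : algebraMap A B a - (u : B)
        = algebraMap A B (ϖA ^ m) * (algebraMap A B c - t) := by
      rw [ha_def, map_add, map_one, map_mul]
      linear_combination -ht
    rw [heq, hkm, pow_succ]
    refine Ideal.mul_mem_mul ?_ ?_
    · rw [hspan]
      exact Ideal.mem_span_singleton_self _
    · have : algebraMap A B c - t = -(t - algebraMap A B c) := by ring
      rw [this]
      exact neg_mem hc
  have hdiffm : algebraMap A B a - (u : B) ∈ IsLocalRing.maximalIdeal B :=
    SetLike.le_def.1 (Ideal.pow_le_self (by omega)) hdiff
  have hunitB : IsUnit (algebraMap A B a) := by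
    by_contra hnu
    have hmem : algebraMap A B a ∈ IsLocalRing.maximalIdeal B := by
      rwa [IsLocalRing.mem_maximalIdeal, mem_nonunits_iff]
    have : (u : B) ∈ IsLocalRing.maximalIdeal B := by
      have : (u : B) = algebraMap A B a - (algebraMap A B a - (u : B)) := by ring
      rw [this]
      exact sub_mem hmem hdiffm
    exact (IsLocalRing.mem_maximalIdeal _).1 this u.isUnit
  have haA : IsUnit a := by
    by_contra hnu
    have : a ∈ IsLocalRing.maximalIdeal A := by
      rwa [IsLocalRing.mem_maximalIdeal, mem_nonunits_iff]
    exact (IsLocalRing.mem_maximalIdeal _).1 (mem_max_of_map hram this) hunitB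
  obtain ⟨av, hav⟩ := haA
  set aB : Bˣ := Units.map (algebraMap A B).toMonoidHom av with haB_def
  have haBcoe : (aB : B) = algebraMap A B a := by rw [haB_def]; simp [hav]
  set w : Bˣ := aB⁻¹ * u with hw_def
  have hwmem : (w : B) - 1 ∈ IsLocalRing.maximalIdeal B ^ k := by
    have hcoe : (w : B) - 1 = ((aB⁻¹ : Bˣ) : B) * ((u : B) - (aB : B)) := by
      have h := Units.inv_mul aB
      push_cast [hw_def]
      linear_combination h
    rw [hcoe, haBcoe]
    refine Ideal.mul_mem_left _ _ ?_
    have : (u : B) - algebraMap A B a = -(algebraMap A B a - (u : B)) := by ring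
    rw [this]
    exact neg_mem hdiff
  have hdecomp : u = aB * w := by rw [hw_def, ← mul_assoc, mul_inv_cancel, one_mul]
  have hKL : Units.map (algebraMap B L).toMonoidHom aB
      = Units.map (algebraMap K L).toMonoidHom (Units.map (algebraMap A K).toMonoidHom av) := by
    ext
    show algebraMap B L (aB : B) = algebraMap K L (algebraMap A K (av : A))
    rw [haBcoe, hav, ← IsScalarTower.algebraMap_apply A B L,
      IsScalarTower.algebraMap_apply A K L]
  rw [hdecomp, map_mul, map_mul, hKL, h3, h1 w hwmem, one_mul]

end main

/-- Let `L/K` be a *ramified* quadratic extension of non-archimedean local fields of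
characteristic zero, with rings of integers `B/A`, and write `U^k = 1 + 𝔭_w^k` for
`k ≥ 1` and `U^0 = 𝒪_{L}^× = Bˣ`.  For `k ≥ 1`, there exists a character of `L^×` of
conductor exactly `𝔭_w^k` (trivial on `U^k` but not on `U^(k-1)`) whose restriction to
`K^×` is trivial, if and only if `k` is even. -/
theorem exists_character_conductor_trivial_restriction_iff_even
    (A K : Type*) [CommRing A] [IsDomain A] [IsDiscreteValuationRing A]
    [Field K] [Algebra A K] [IsFractionRing A K] [CharZero K]
    [Finite (ResidueField A)] [IsAdicComplete (maximalIdeal A) A]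
    (B L : Type*) [Field L] [Algebra K L] (hrank : Module.finrank K L = 2)
    [CommRing B] [IsDomain B] [IsDiscreteValuationRing B]
    [Algebra B L] [IsFractionRing B L]
    [Algebra A B] [Algebra A L] [IsScalarTower A K L] [IsScalarTower A B L]
    (hram : (maximalIdeal A).map (algebraMap A B) = maximalIdeal B ^ 2)
    (k : ℕ) (hk : 1 ≤ k) :
    (∃ χ : Lˣ →* ℂˣ,
        (∀ u : Bˣ, (u : B) - 1 ∈ maximalIdeal B ^ k →
          χ (Units.map (algebraMap B L).toMonoidHom u) = 1) ∧
        ¬ (∀ u : Bˣ, (u : B) - 1 ∈ maximalIdeal B ^ (k - 1) →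
          χ (Units.map (algebraMap B L).toMonoidHom u) = 1) ∧
        (∀ a : Kˣ, χ (Units.map (algebraMap K L).toMonoidHom a) = 1)) ↔
      Even k := by
  constructor
  · rintro ⟨χ, h1, h2, h3⟩
    by_contra hodd
    obtain ⟨m, hm⟩ := Nat.not_even_iff_odd.1 hodd
    exact h2 fun u hu => odd_case (K := K) hram hrank hm χ h1 h3 u hu
  · intro heven
    obtain ⟨m, hm⟩ := heven
    have hm' : k = 2 * m := by omega
    have hm1 : 1 ≤ m := by omega
    obtain ⟨ϖ, hϖ⟩ := IsDiscreteValuationRing.exists_irreducible B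
    have hϖmem : ϖ ∈ maximalIdeal B := by
      rw [(IsDiscreteValuationRing.irreducible_iff_uniformizer ϖ).1 hϖ]
      exact Ideal.mem_span_singleton_self ϖ
    have hxunit : IsUnit (1 + ϖ ^ (k - 1)) := by
      by_contra hnu
      have hmem : 1 + ϖ ^ (k - 1) ∈ maximalIdeal B := by
        rwa [IsLocalRing.mem_maximalIdeal, mem_nonunits_iff]
      have h1m : (1 : B) ∈ maximalIdeal B := by
        have : (1 : B) = (1 + ϖ ^ (k - 1)) - ϖ ^ (k - 1) := by ring
        rw [this]
        exact sub_mem hmem (Ideal.pow_mem_of_mem _ hϖmem _ (by omega))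
      exact (IsLocalRing.mem_maximalIdeal _).1 h1m isUnit_one
    set xu : Bˣ := hxunit.unit with hxu_def
    have hxucoe : (xu : B) = 1 + ϖ ^ (k - 1) := IsUnit.unit_spec hxunit
    have hxusub : (xu : B) - 1 = ϖ ^ (k - 1) := by rw [hxucoe]; ring
    set H : Subgroup Lˣ := (Units.map (algebraMap K L).toMonoidHom).range ⊔
      Subgroup.map (Units.map (algebraMap B L).toMonoidHom)
        (unitsSub (maximalIdeal B ^ k)) with hH_def
    have hALinj : Function.Injective (algebraMap A L) := by
      rw [IsScalarTower.algebraMap_eq A K L]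
      exact (algebraMap K L).injective.comp (IsFractionRing.injective A K)
    have hnot : Units.map (algebraMap B L).toMonoidHom xu ∉ H := by
      intro hmem
      rw [hH_def, Subgroup.mem_sup] at hmem
      obtain ⟨y, hy, z, hz, hyz⟩ := hmem
      obtain ⟨α, rfl⟩ := hy
      obtain ⟨w, hw, rfl⟩ := hz
      set β : Bˣ := xu * w⁻¹ with hβ_def
      have hβL : algebraMap K L (α : K) = algebraMap B L (β : B) := by
        have : Units.map (algebraMap K L).toMonoidHom α
            = Units.map (algebraMap B L).toMonoidHom β := by
          rw [hβ_def, map_mul, ← hyz]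
          rw [map_inv]
          group
        have h2 := congrArg (fun (t : Lˣ) => (t : L)) this
        simpa using h2
      obtain ⟨a, ha⟩ := mem_range_of_mem_range (K := K) hram hβL
      have hwk1 : w ∈ unitsSub (maximalIdeal B ^ (k - 1)) := by
        rw [mem_unitsSub]
        exact SetLike.le_def.1 (Ideal.pow_le_pow_right (by omega)) hw
      have hβk1 : β ∈ unitsSub (maximalIdeal B ^ (k - 1)) := by
        refine Subgroup.mul_mem _ ?_ (Subgroup.inv_mem _ hwk1)
        rw [mem_unitsSub, hxusub]
        exact Ideal.pow_mem_pow hϖmem _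
      have hak : algebraMap A B (a - 1) ∈ maximalIdeal B ^ (2 * m - 1) := by
        rw [map_sub, map_one, ha]
        have : k - 1 = 2 * m - 1 := by omega
        rw [← this]
        exact hβk1
      have haup : a - 1 ∈ maximalIdeal A ^ m := odd_pow_up hram hak hm1
      have hβk : β ∈ unitsSub (maximalIdeal B ^ k) := by
        rw [mem_unitsSub, ← ha, ← map_one (algebraMap A B), ← map_sub]
        have := max_pow_map (B := B) hram haup
        rwa [← hm'] at this
      have hxuk : xu ∈ unitsSub (maximalIdeal B ^ k) := by
        have : xu = β * w := by rw [hβ_def]; group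
        rw [this]
        exact Subgroup.mul_mem _ hβk hw
      rw [mem_unitsSub, hxusub] at hxuk
      rw [(IsDiscreteValuationRing.irreducible_iff_uniformizer ϖ).1 hϖ,
        Ideal.span_singleton_pow, Ideal.mem_span_singleton] at hxuk
      rw [pow_dvd_pow_iff hϖ.ne_zero hϖ.not_isUnit] at hxuk
      omega
    obtain ⟨χ, hH, hx⟩ := exists_char H hnot
    refine ⟨χ, ?_, ?_, ?_⟩
    · intro u hu
      exact hH _ (Subgroup.mem_sup_right ⟨u, hu, rfl⟩)
    · intro hall
      apply hx
      apply hall xu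
      rw [hxusub]
      exact Ideal.pow_mem_pow hϖmem _
    · intro α
      exact hH _ (Subgroup.mem_sup_left ⟨α, rfl⟩)
end
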